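/- Let C > 0, M > 0, R₁ > 2M, and let R : [0,T) → ℝ be continuously differentiable with R(0) ≤ R₁, R(t) > 2M for all t, and satisfying R′(t) ≤ −C·(R(t) − 2M)/R(t). Then for all t ∈ [0,T), R(t) ≤ 2M + (R₁ − 2M)·e^{(R₁ − 2M − Ct)/(2M)}. -/

import Mathlib

/-!
Along the characteristic, `d/dt (R + 2M log (R - 2M)) = R' R / (R - 2M) ≤ -C`, so
`R t + 2M log (R t - 2M) + C t` is non-increasing. Comparing with its value at `t = 0`, bounded
through `R 0 ≤ R₁`, and using `R t > 2M` to drop the linear term leaves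
`log (R t - 2M) ≤ log (R₁ - 2M) + (R₁ - 2M - C t) / (2M)`; exponentiate.
-/

open Real Set

theorem hasDerivAt_add_mul_log_sub {a r : ℝ} (har : a < r) :
    HasDerivAt (fun x => x + a * log (x - a)) (r / (r - a)) r := by
  have hne : r - a ≠ 0 := (sub_pos.2 har).ne'
  refine ((hasDerivAt_id' r).add
    ((((hasDerivAt_id' r).sub_const a).log hne).const_mul a)).congr_deriv ?_
  field_simp
  ring

theorem monotoneOn_add_mul_log_sub {a : ℝ} (ha : 0 ≤ a) :
    MonotoneOn (fun x => x + a * log (x - a)) (Ioi a) := fun x hx y _ hxy => by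
  have hlog : log (x - a) ≤ log (y - a) := log_le_log (sub_pos.2 hx) (by linarith)
  dsimp only
  gcongr

theorem antitoneOn_add_mul_log_sub_add_mul {a C : ℝ} {D : Set ℝ} (hD : Convex ℝ D) (ha : 0 ≤ a)
    {R R' : ℝ → ℝ} (hderiv : ∀ t ∈ D, HasDerivAt R (R' t) t) (hRgt : ∀ t ∈ D, a < R t)
    (hineq : ∀ t ∈ D, R' t ≤ -C * (R t - a) / R t) :
    AntitoneOn (fun t => R t + a * log (R t - a) + C * t) D := by
  have hG : ∀ t ∈ D, HasDerivAt (fun t => R t + a * log (R t - a) + C * t)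
      (R t / (R t - a) * R' t + C) t := fun t ht =>
    ((hasDerivAt_add_mul_log_sub (hRgt t ht)).comp t (hderiv t ht)).add
      ((hasDerivAt_id t).const_mul C |>.congr_deriv (mul_one C))
  refine antitoneOn_of_hasDerivWithinAt_nonpos hD
    (fun t ht => (hG t ht).continuousAt.continuousWithinAt)
    (fun t ht => (hG t (interior_subset ht)).hasDerivWithinAt) fun t ht => ?_
  replace ht := interior_subset ht
  have hsub : 0 < R t - a := sub_pos.2 (hRgt t ht)
  have hR : 0 < R t := by linarith
  calc R t / (R t - a) * R' t + C
      ≤ R t / (R t - a) * (-C * (R t - a) / R t) + C := by gcongr; exact hineq t ht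
    _ = 0 := by field_simp; ring

theorem sub_le_mul_exp_of_add_mul_log_le {a r ρ c : ℝ} (ha : 0 < a) (har : a < r) (haρ : a < ρ)
    (h : r + a * log (r - a) + c ≤ ρ + a * log (ρ - a)) :
    r - a ≤ (ρ - a) * exp ((ρ - a - c) / a) := by
  have hlog : log (r - a) ≤ log (ρ - a) + (ρ - a - c) / a := by
    rw [← sub_le_iff_le_add', le_div_iff₀ ha]
    nlinarith
  calc r - a = exp (log (r - a)) := (exp_log (sub_pos.2 har)).symm
    _ ≤ exp (log (ρ - a) + (ρ - a - c) / a) := exp_le_exp.2 hlog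
    _ = (ρ - a) * exp ((ρ - a - c) / a) := by rw [exp_add, exp_log (sub_pos.2 haρ)]

theorem support_estimate_exponential_general
    (C M R₁ T : ℝ) (hM : 0 < M)
    (R R' : ℝ → ℝ)
    (hderiv : ∀ t ∈ Ico 0 T, HasDerivAt R (R' t) t)
    (hR0 : R 0 ≤ R₁)
    (hRgt : ∀ t ∈ Ico 0 T, 2 * M < R t)
    (hineq : ∀ t ∈ Ico 0 T, R' t ≤ -C * (R t - 2 * M) / R t) :
    ∀ t ∈ Ico 0 T,
      R t ≤ 2 * M + (R₁ - 2 * M) * Real.exp ((R₁ - 2 * M - C * t) / (2 * M)) := by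
  intro t ht
  have h0 : (0 : ℝ) ∈ Ico 0 T := ⟨le_rfl, ht.1.trans_lt ht.2⟩
  have hR₁ : 2 * M < R₁ := (hRgt 0 h0).trans_le hR0
  have hdecay := antitoneOn_add_mul_log_sub_add_mul (convex_Ico 0 T) (by positivity)
    hderiv hRgt hineq h0 ht ht.1
  have hstart := monotoneOn_add_mul_log_sub (by positivity : 0 ≤ 2 * M) (hRgt 0 h0) hR₁ hR0
  simp only [mul_zero, add_zero] at hdecay hstart
  linarith [sub_le_mul_exp_of_add_mul_log_le (by positivity) (hRgt t ht) hR₁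
    (hdecay.trans hstart)]

theorem support_estimate_exponential
    (C M R₁ T : ℝ) (hC : 0 < C) (hM : 0 < M) (hR₁ : 2 * M < R₁)
    (R R' : ℝ → ℝ)
    (hderiv : ∀ t ∈ Ico 0 T, HasDerivAt R (R' t) t)
    (hR0 : R 0 ≤ R₁)
    (hRgt : ∀ t ∈ Ico 0 T, 2 * M < R t)
    (hineq : ∀ t ∈ Ico 0 T, R' t ≤ -C * (R t - 2 * M) / R t) :
    ∀ t ∈ Ico 0 T,
      R t ≤ 2 * M + (R₁ - 2 * M) * Real.exp ((R₁ - 2 * M - C * t) / (2 * M)) :=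
  support_estimate_exponential_general C M R₁ T hM R R' hderiv hR0 hRgt hineq
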